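/- arXiv:1303.6699 — 2 statements merged into one kernel-verified Lean document; each statement's English description precedes it below -/
import Mathlib

section
/- For s > 0, λ > 0, ν > 0, β > 0, m a positive integer, with s^ν > λ, the Laplace transform of t^{β-1} E^m_{ν,β}(-λ t^ν) equals s^{νm - β}/(λ + s^ν)^m. -/
/-!
Expand `E^m_{ν,β}(-λ t^ν)` as a power series and integrate termwise: the `k`-th term contributes
`Γ(νk+β) / s^(νk+β)`, which cancels the `Γ(νk+β)` in the denominator of its coefficient, and
`Γ(m+k) / (k! Γ(m)) = binom(k+m-1, m-1)`. What is left is the negative binomial series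
`s^(-β) ∑ binom(k+m-1, m-1) (-λ/s^ν)^k = s^(-β) (1 + λ/s^ν)^(-m)`. The same series with `λ/s^ν`
in place of `-λ/s^ν` bounds the integrals of the absolute values of the terms, which justifies
the interchange of sum and integral when `λ < s^ν`.
-/

open MeasureTheory Real Set

/-- Generalized (Prabhakar) Mittag-Leffler function
`E^m_{ν,β}(x) = Σ x^k Γ(m+k) / (k! Γ(νk+β) Γ(m))`. -/
noncomputable def MLP (ν β : ℝ) (m : ℕ) (x : ℝ) : ℝ :=
  ∑' k : ℕ, x ^ k * Real.Gamma ((m : ℝ) + k) /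
    ((k.factorial : ℝ) * Real.Gamma (ν * (k : ℝ) + β) * Real.Gamma (m : ℝ))

open Nat in
lemma Real.Gamma_natCast_add_one_add_div (n k : ℕ) :
    Gamma (n + 1 + k) / (k ! * Gamma (n + 1)) = (k + n).choose n := by
  rw [show (n : ℝ) + 1 + k = ↑(k + n) + 1 by push_cast; ring, Gamma_nat_eq_factorial,
    Gamma_nat_eq_factorial, ← Nat.add_choose_mul_factorial_mul_factorial k n]
  push_cast
  field_simp

lemma integrableOn_rpow_sub_one_mul_exp_neg_mul {a s : ℝ} (ha : 0 < a) (hs : 0 < s) :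
    IntegrableOn (fun t : ℝ => t ^ (a - 1) * exp (-(s * t))) (Ioi 0) := by
  simpa [rpow_one, neg_mul] using
    integrableOn_rpow_mul_exp_neg_mul_rpow (p := 1) (by linarith : -1 < a - 1) one_pos hs

lemma integral_rpow_sub_one_mul_exp_neg_mul {a s : ℝ} (ha : 0 < a) (hs : 0 < s) :
    ∫ t in Ioi 0, t ^ (a - 1) * exp (-(s * t)) = Gamma a / s ^ a := by
  rw [integral_rpow_mul_exp_neg_mul_Ioi ha hs, one_div, inv_rpow hs.le, inv_mul_eq_div]

theorem integral_exp_neg_mul_mul_rpow_mul_tsum {a : ℕ → ℝ} {s ν β c : ℝ} (hs : 0 < s)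
    (hν : 0 ≤ ν) (hβ : 0 < β)
    (hsum : Summable fun k : ℕ => ‖a k * c ^ k * Gamma (ν * k + β) / s ^ (ν * k + β)‖) :
    ∫ t in Ioi 0, exp (-s * t) * (t ^ (β - 1) * ∑' k : ℕ, (c * t ^ ν) ^ k * a k) =
      ∑' k : ℕ, a k * c ^ k * Gamma (ν * k + β) / s ^ (ν * k + β) := by
  set F : ℕ → ℝ → ℝ := fun k t => a k * c ^ k * (t ^ (ν * k + β - 1) * exp (-(s * t)))
  have hpos : ∀ k : ℕ, 0 < ν * k + β := fun k => by positivity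
  have hF : ∀ t ∈ Ioi (0 : ℝ),
      exp (-s * t) * (t ^ (β - 1) * ∑' k : ℕ, (c * t ^ ν) ^ k * a k) = ∑' k, F k t := by
    intro t ht
    rw [← tsum_mul_left, ← tsum_mul_left]
    refine tsum_congr fun k => ?_
    simp only [F]
    rw [mul_pow, ← rpow_natCast (t ^ ν), ← rpow_mul ht.le, add_sub_assoc, rpow_add ht, neg_mul]
    ring
  have hF_integral :
      ∀ k, ∫ t in Ioi 0, F k t = a k * c ^ k * Gamma (ν * k + β) / s ^ (ν * k + β) := fun k => by
    rw [integral_const_mul, integral_rpow_sub_one_mul_exp_neg_mul (hpos k) hs, mul_div_assoc]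
  have hF_integral_norm :
      ∀ k, ∫ t in Ioi 0, ‖F k t‖ = ‖a k * c ^ k * Gamma (ν * k + β) / s ^ (ν * k + β)‖ := by
    intro k
    have hG : ∀ t ∈ Ioi (0 : ℝ),
        ‖F k t‖ = ‖a k * c ^ k‖ * (t ^ (ν * k + β - 1) * exp (-(s * t))) := fun t ht => by
      have : 0 ≤ t ^ (ν * k + β - 1) * exp (-(s * t)) := by have := ht.out.le; positivity
      rw [norm_mul, norm_of_nonneg this]
    rw [setIntegral_congr_fun measurableSet_Ioi hG, integral_const_mul,
      integral_rpow_sub_one_mul_exp_neg_mul (hpos k) hs, norm_div, norm_mul (a k * c ^ k),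
      norm_of_nonneg (Gamma_pos_of_pos (hpos k)).le, norm_of_nonneg (rpow_pos_of_pos hs _).le,
      mul_div_assoc]
  rw [setIntegral_congr_fun measurableSet_Ioi hF, ← integral_tsum_of_summable_integral_norm]
  · exact tsum_congr hF_integral
  · exact fun k => (integrableOn_rpow_sub_one_mul_exp_neg_mul (hpos k) hs).const_mul _
  · simpa only [hF_integral_norm] using hsum

lemma laplace_MLP_term {s ν β : ℝ} (hs : 0 < s) (hν : 0 ≤ ν) (hβ : 0 < β) (c : ℝ) (n k : ℕ) :
    Gamma (↑(n + 1) + k) / (k.factorial * Gamma (ν * k + β) * Gamma ↑(n + 1)) * c ^ k *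
        Gamma (ν * k + β) / s ^ (ν * k + β) =
      s ^ (-β) * ((k + n).choose n * (c / s ^ ν) ^ k) := by
  have hΓ : Gamma (ν * k + β) ≠ 0 := (Gamma_pos_of_pos (by positivity)).ne'
  rw [← Real.Gamma_natCast_add_one_add_div n k, rpow_add hs, rpow_mul hs.le, rpow_natCast,
    rpow_neg hs.le, div_pow]
  push_cast
  field_simp

theorem laplace_MLP (s lam ν β : ℝ) (m : ℕ) (hs : 0 < s) (hlam : 0 < lam)
    (hν : 0 < ν) (hβ : 0 < β) (hm : 1 ≤ m) (hconv : lam < s ^ ν) :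
    ∫ t in Set.Ioi (0 : ℝ),
        Real.exp (-s * t) * (t ^ (β - 1) * MLP ν β m (-lam * t ^ ν))
      = s ^ (ν * m - β) / (lam + s ^ ν) ^ m := by
  obtain ⟨n, rfl⟩ := Nat.exists_eq_add_of_le' hm
  have hsν : 0 < s ^ ν := rpow_pos_of_pos hs ν
  have hr : ‖-lam / s ^ ν‖ < 1 := by
    rwa [neg_div, norm_neg, norm_of_nonneg (by positivity), div_lt_one hsν]
  have hsum : Summable fun k : ℕ => ‖Gamma (↑(n + 1) + k) /
      (k.factorial * Gamma (ν * k + β) * Gamma ↑(n + 1)) * (-lam) ^ k *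
        Gamma (ν * k + β) / s ^ (ν * k + β)‖ := by
    simp only [laplace_MLP_term hs hν.le hβ, norm_eq_abs, summable_abs_iff]
    exact (summable_choose_mul_geometric_of_norm_lt_one n hr).mul_left _
  simp only [MLP, mul_div_assoc]
  rw [integral_exp_neg_mul_mul_rpow_mul_tsum hs hν.le hβ hsum,
    tsum_congr (laplace_MLP_term hs hν.le hβ (-lam) n), tsum_mul_left,
    tsum_choose_mul_geometric_of_norm_lt_one n hr, neg_div, sub_neg_eq_add, one_add_div hsν.ne',
    rpow_sub hs, rpow_mul hs.le, rpow_natCast, rpow_neg hs.le, div_pow]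
  field_simp
  ring
end

section
/- For λ > 0, t > 0, and ν ∈ (0,1], the mean of the distribution q(j) = (λt)^j/(Γ(νj+1) E_{ν,1}(λt)) equals λt E_{ν,ν}(λt)/(ν E_{ν,1}(λt)), i.e., Σ_{j=0}^∞ j q(j) = λt E_{ν,ν}(λt)/(ν E_{ν,1}(λt)). -/
/-!
Dropping the vanishing `j = 0` term and shifting the index, `Γ(ν(k+1)+1) = ν(k+1) Γ(νk+ν)`
cancels the factor `k+1`, so `Σ j x^j/Γ(νj+1) = (x/ν) E_{ν,ν}(x)`; the normalisation
`E_{ν,1}(x)` is a constant factor. Every `tsum` manipulation used holds without summability.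
-/

open Real

/-- Two-parameter Mittag-Leffler function `E_{ν,β}(x) = Σ x^k / Γ(νk+β)`. -/
noncomputable def ML (ν β x : ℝ) : ℝ := ∑' k : ℕ, x ^ k / Real.Gamma (ν * (k : ℝ) + β)

theorem tsum_eq_tsum_succ_of_eq_zero {M : Type*} [AddCommMonoid M] [TopologicalSpace M]
    {f : ℕ → M} (hf : f 0 = 0) : ∑' n, f n = ∑' n, f (n + 1) :=
  (tsum_pnat_eq_tsum_of_eq_zero hf).symm.trans tsum_pnat_eq_tsum_succ

theorem natCast_succ_div_Gamma_mul_succ_add_one {ν : ℝ} (hν : ν ≠ 0) (k : ℕ) :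
    ((k + 1 : ℕ) : ℝ) / Gamma (ν * (k + 1 : ℕ) + 1) = ν⁻¹ / Gamma (ν * k + ν) := by
  have hk : (k : ℝ) + 1 ≠ 0 := by positivity
  push_cast
  rw [Gamma_add_one (mul_ne_zero hν hk), ← div_div, div_mul_cancel_right₀ hk, mul_add_one]

theorem tsum_natCast_mul_pow_div_Gamma {ν : ℝ} (hν : ν ≠ 0) (x : ℝ) :
    ∑' j : ℕ, (j : ℝ) * (x ^ j / Gamma (ν * j + 1)) = x * ML ν ν x / ν := by
  rw [tsum_eq_tsum_succ_of_eq_zero (by simp)]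
  calc ∑' k : ℕ, ((k + 1 : ℕ) : ℝ) * (x ^ (k + 1) / Gamma (ν * (k + 1 : ℕ) + 1))
      = ∑' k : ℕ, x / ν * (x ^ k / Gamma (ν * k + ν)) := by
        refine tsum_congr fun k => ?_
        rw [mul_div_left_comm, natCast_succ_div_Gamma_mul_succ_add_one hν, pow_succ]
        ring
    _ = x * ML ν ν x / ν := by rw [tsum_mul_left, ML]; ring

theorem mean_fractional_poisson_general (lam t ν : ℝ)
    (hν : 0 < ν) :
    ∑' j : ℕ, (j : ℝ) * ((lam * t) ^ j / (Real.Gamma (ν * (j : ℝ) + 1) * ML ν 1 (lam * t)))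
      = lam * t * ML ν ν (lam * t) / (ν * ML ν 1 (lam * t)) := by
  calc _ = (∑' j : ℕ, (j : ℝ) * ((lam * t) ^ j / Gamma (ν * j + 1))) / ML ν 1 (lam * t) := by
        simp_rw [← tsum_div_const, mul_div_assoc, div_div]
    _ = _ := by rw [tsum_natCast_mul_pow_div_Gamma hν.ne', div_div]

theorem mean_fractional_poisson (lam t ν : ℝ) (hlam : 0 < lam) (ht : 0 < t)
    (hν : 0 < ν) (hν1 : ν ≤ 1) :
    ∑' j : ℕ, (j : ℝ) * ((lam * t) ^ j / (Real.Gamma (ν * (j : ℝ) + 1) * ML ν 1 (lam * t)))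
      = lam * t * ML ν ν (lam * t) / (ν * ML ν 1 (lam * t)) :=
  mean_fractional_poisson_general lam t ν hν
end
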